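/- Let i > p−2 and let γ ∈ Ĥ_i. Then J_i(γ) ⊆ 𝔭^{3i+3−p}; equivalently, if J_i(γ) = 𝔭^λ is nonzero then λ ≥ 3i+3−p. -/

import Mathlib

set_option synthInstance.maxHeartbeats 1000000
set_option maxHeartbeats 1000000

namespace MaximalClassFrame

variable (p : ℕ) [Fact p.Prime]
variable (K : Type) [Field K] [Algebra ℚ_[p] K] [Algebra ℤ_[p] K]
  [IsScalarTower ℤ_[p] ℚ_[p] K]

/-- The maximal order `𝒪` of `K`: the integral closure of `ℤ_p` in `K`. -/
noncomputable abbrev 𝒪 : Subalgebra ℤ_[p] K := integralClosure ℤ_[p] K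

variable (θ : 𝒪 p K)

/-- The maximal ideal `𝔭` of `𝒪`, generated by `κ = θ - 1`. -/
noncomputable def pid : Ideal (𝒪 p K) := Ideal.span {θ - 1}

/-- A `ℤ_p`-bilinear map `γ : 𝒪 × 𝒪 → 𝒪` is `P`-equivariant if it is
alternating and satisfies `γ(θx, θy) = θ·γ(x,y)` for all `x, y`. -/
def IsPEquivariant (γ : 𝒪 p K →ₗ[ℤ_[p]] 𝒪 p K →ₗ[ℤ_[p]] 𝒪 p K) : Prop :=
  (∀ x, γ x x = 0) ∧ ∀ x y, γ (θ * x) (θ * y) = θ * γ x y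

/-- `γ ∈ Ĥ_i`: the additive subgroup of `𝒪` generated by
`{γ(x,y) : x, y ∈ 𝔭^i}` equals `𝔭^(2i+1)`. -/
def InHhat (i : ℕ) (γ : 𝒪 p K →ₗ[ℤ_[p]] 𝒪 p K →ₗ[ℤ_[p]] 𝒪 p K) : Prop :=
  Submodule.span ℤ (Set.image2 (fun x y => γ x y)
      ((pid p K θ ^ i : Ideal (𝒪 p K)) : Set (𝒪 p K))
      ((pid p K θ ^ i : Ideal (𝒪 p K)) : Set (𝒪 p K)))
    = (pid p K θ ^ (2 * i + 1)).restrictScalars ℤ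

variable (γ : 𝒪 p K →ₗ[ℤ_[p]] 𝒪 p K →ₗ[ℤ_[p]] 𝒪 p K)

/-- The ideal `J_i(γ)` of `𝒪` generated by the Jacobi expressions
`γ(γ(x,y),z) + γ(γ(y,z),x) + γ(γ(z,x),y)` for `x, y, z ∈ 𝔭^i`. -/
noncomputable def Jid (i : ℕ) : Ideal (𝒪 p K) :=
  Ideal.span {v : 𝒪 p K | ∃ x ∈ pid p K θ ^ i, ∃ y ∈ pid p K θ ^ i, ∃ z ∈ pid p K θ ^ i,
    v = γ (γ x y) z + γ (γ y z) x + γ (γ z x) y}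

/-- The ideals `W_k(i)`:  `W_1(i) = 𝔭^i` and `W_{k+1}(i)` is the ideal
generated by `{γ(x,y) : x ∈ W_k(i), y ∈ 𝔭^i}`. -/
noncomputable def Wid (i : ℕ) : ℕ → Ideal (𝒪 p K)
  | 0 => ⊤
  | 1 => pid p K θ ^ i
  | (k + 2) => Ideal.span (Set.image2 (fun x y => γ x y)
      ((Wid i (k + 1) : Ideal (𝒪 p K)) : Set (𝒪 p K))
      ((pid p K θ ^ i : Ideal (𝒪 p K)) : Set (𝒪 p K)))

/-! Since `p𝒪 = 𝔭^(p-1)`, write `i + 1 = (p-1)m + r` with `r < p - 1`: then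
`γ(x,y) ∈ 𝔭^(2i+1) ⊆ p^m 𝔭^i` for `x, y ∈ 𝔭^i`, and additivity pulls `p^m` out, so
`γ(γ(x,y),z) ∈ p^m 𝔭^(2i+1) = 𝔭^((p-1)m+2i+1) ⊆ 𝔭^(3i+3-p)`. Each term of the Jacobi
expression already lies in this power of `𝔭`. -/

theorem _root_.IsPrimitiveRoot.associated_sub_one_pow_pred_natCast {A : Type*} [CommRing A]
    [IsDomain A] {q : ℕ} [hq : Fact q.Prime] {ζ : A} (hζ : IsPrimitiveRoot ζ q) :
    Associated ((ζ - 1) ^ (q - 1)) (q : A) := by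
  obtain ⟨n, rfl⟩ := Nat.exists_eq_add_one_of_ne_zero hq.out.ne_zero
  have hpow : (ζ - 1) ^ n = ∏ _k ∈ Finset.range n, (ζ - 1) := by
    rw [Finset.prod_const, Finset.card_range]
  rw [Nat.add_sub_cancel, Nat.cast_add_one, ← hζ.prod_one_sub_pow_eq_order, hpow]
  refine Associated.prod _ _ _ fun k hk => ?_
  have hcop : (k + 1).Coprime (n + 1) :=
    (Nat.coprime_of_lt_prime k.succ_ne_zero (by simpa using hk) hq.out).symm
  simpa only [neg_sub] using (hζ.associated_sub_one_pow_sub_one_of_coprime hcop).neg_right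

theorem _root_.LinearMap.apply_apply_mem_pow_of_pow_eq_span_natCast {A S : Type*}
    [CommRing A] [CommSemiring S] [Module S A] (γ : A →ₗ[S] A →ₗ[S] A) {P : Ideal A}
    {e n : ℕ} (he : 0 < e)
    (hn : P ^ e = Ideal.span {(n : A)}) {i : ℕ}
    (hγ : ∀ x ∈ P ^ i, ∀ y ∈ P ^ i, γ x y ∈ P ^ (2 * i + 1))
    {a b c : A} (ha : a ∈ P ^ i) (hb : b ∈ P ^ i) (hc : c ∈ P ^ i) :
    γ (γ a b) c ∈ P ^ (3 * i + 3 - e) := by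
  set m := (i + 1) / e
  have hdiv : e * m + (i + 1) % e = i + 1 := Nat.div_add_mod (i + 1) e
  have hmod : (i + 1) % e < e := Nat.mod_lt _ he
  have hpow : ∀ k, P ^ (e * m + k) = Ideal.span {((n ^ m : ℕ) : A)} * P ^ k := by
    intro k
    rw [pow_add, pow_mul, hn, Ideal.span_singleton_pow, Nat.cast_pow]
  obtain ⟨w, hw, hab⟩ : ∃ w ∈ P ^ i, ((n ^ m : ℕ) : A) * w = γ a b := by
    rw [← Ideal.mem_span_singleton_mul, ← hpow]
    exact Ideal.pow_le_pow_right (by omega) (hγ a ha b hb)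
  have habc : γ (γ a b) c ∈ P ^ (e * m + (2 * i + 1)) := by
    rw [hpow, ← hab, ← nsmul_eq_mul, map_nsmul, LinearMap.smul_apply, nsmul_eq_mul]
    exact Ideal.mul_mem_mul (Ideal.mem_span_singleton_self _) (hγ w hw c hc)
  exact Ideal.pow_le_pow_right (by omega) habc

section

variable {p K θ γ}

omit [Algebra ℚ_[p] K] [IsScalarTower ℤ_[p] ℚ_[p] K] in
theorem pid_pow_pred_eq_span_natCast (hθ : IsPrimitiveRoot (θ : K) p) :
    pid p K θ ^ (p - 1) = Ideal.span {(p : 𝒪 p K)} := by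
  rw [pid, Ideal.span_singleton_pow, Ideal.span_singleton_eq_span_singleton]
  exact (hθ.of_map_of_injective (f := (𝒪 p K).val) Subtype.coe_injective)
    |>.associated_sub_one_pow_pred_natCast

omit [Algebra ℚ_[p] K] [IsScalarTower ℤ_[p] ℚ_[p] K] in
theorem InHhat.apply_mem {i : ℕ} (hγi : InHhat p K θ i γ) {x y : 𝒪 p K}
    (hx : x ∈ pid p K θ ^ i) (hy : y ∈ pid p K θ ^ i) :
    γ x y ∈ pid p K θ ^ (2 * i + 1) := by
  have h : γ x y ∈ (pid p K θ ^ (2 * i + 1)).restrictScalars ℤ :=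
    hγi ▸ Submodule.subset_span ⟨x, hx, y, hy, rfl⟩
  exact h

end

theorem frame_J_bound (hθ : IsPrimitiveRoot (θ : K) p)
    (i : ℕ) (hγi : InHhat p K θ i γ) :
    Jid p K θ γ i ≤ pid p K θ ^ (3 * i + 3 - p) := by
  have hp : 1 < p := (Fact.out : p.Prime).one_lt
  have hterm : ∀ a ∈ pid p K θ ^ i, ∀ b ∈ pid p K θ ^ i, ∀ c ∈ pid p K θ ^ i,
      γ (γ a b) c ∈ pid p K θ ^ (3 * i + 3 - p) := fun a ha b hb c hc =>
    Ideal.pow_le_pow_right (by omega) <| γ.apply_apply_mem_pow_of_pow_eq_span_natCast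
      (by omega) (pid_pow_pred_eq_span_natCast hθ) (fun _ hx _ hy => hγi.apply_mem hx hy) ha hb hc
  rw [Jid, Ideal.span_le]
  rintro _ ⟨x, hx, y, hy, z, hz, rfl⟩
  exact add_mem (add_mem (hterm x hx y hy z hz) (hterm y hy z hz x hx)) (hterm z hz x hx y hy)

end MaximalClassFrame
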